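/- Let A be a satisfiable finite set of atomic comparisons over V and let b₁, …, bₘ be closed semi-interval ACs (each of the form x ≤ c or x ≥ c for a variable x and real constant c). If A entails the disjunction b₁ ∨ … ∨ bₘ, then there exist indices i and j (possibly equal) such that A entails bᵢ ∨ bⱼ; i.e., any such containment implication in minimal form has at most two ACs on its right-hand side. -/

import Mathlib

/-!
Suppose no two of the `bⱼ` suffice, and pick for every pair `(i, k)` a model `w i k` of `A`
violating `bᵢ` and `bₖ`. Comparisons by `<`, `≤`, `=` survive pointwise `min` and `max`, so
`σ = minₖ maxᵢ w i k` satisfies every such comparison of `A`. A closed LSI `bⱼ` fails strictly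
at `σ` because it fails on the whole row `w j ·`, and a closed RSI `bⱼ` because it fails on the
whole column `w · j`. Moving from `σ` a little towards a model `ρ` of `A` keeps these strict
failures and the convex comparisons of `A`, and repairs its `≠` comparisons, which can fail at
only one point of the segment. The result is a model of `A` violating every `bⱼ`.
-/

namespace QC

/-- A term is a variable in `V` or a real constant. -/
inductive Term (V : Type) where
  | var : V → Term V
  | const : ℝ → Term V

/-- The comparison relations `<, ≤, =, ≠`. -/
inductive Rel where
  | lt | le | eq | ne

/-- A comparison between two terms.  (`x ≥ c` is represented as `c ≤ x`, etc.) -/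
structure Comp (V : Type) where
  rel : Rel
  lhs : Term V
  rhs : Term V

def Term.eval {V : Type} (σ : V → ℝ) : Term V → ℝ
  | .var x => σ x
  | .const c => c

def Rel.holds : Rel → ℝ → ℝ → Prop
  | .lt => fun a b => a < b
  | .le => fun a b => a ≤ b
  | .eq => fun a b => a = b
  | .ne => fun a b => a ≠ b

/-- An assignment `σ : V → ℝ` satisfies a comparison. -/
def Comp.holds {V : Type} (a : Comp V) (σ : V → ℝ) : Prop :=
  a.rel.holds (a.lhs.eval σ) (a.rhs.eval σ)

def Term.isVar {V : Type} : Term V → Prop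
  | .var _ => True
  | .const _ => False

/-- An atomic comparison: at least one side is a variable. -/
def IsAC {V : Type} (a : Comp V) : Prop := a.lhs.isVar ∨ a.rhs.isVar

/-- `σ` satisfies every comparison in the finite set `F`. -/
def Sat {V : Type} (F : Finset (Comp V)) (σ : V → ℝ) : Prop := ∀ a ∈ F, a.holds σ

/-- A closed LSI comparison: `x ≤ c`. -/
def IsClosedLSI {V : Type} (a : Comp V) : Prop :=
  ∃ (x : V) (c : ℝ), a = ⟨Rel.le, Term.var x, Term.const c⟩

/-- An open LSI comparison: `x < c`. -/
def IsOpenLSI {V : Type} (a : Comp V) : Prop :=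
  ∃ (x : V) (c : ℝ), a = ⟨Rel.lt, Term.var x, Term.const c⟩

/-- A closed RSI comparison: `x ≥ c`, represented as `c ≤ x`. -/
def IsClosedRSI {V : Type} (a : Comp V) : Prop :=
  ∃ (x : V) (c : ℝ), a = ⟨Rel.le, Term.const c, Term.var x⟩

/-- An open RSI comparison: `x > c`, represented as `c < x`. -/
def IsOpenRSI {V : Type} (a : Comp V) : Prop :=
  ∃ (x : V) (c : ℝ), a = ⟨Rel.lt, Term.const c, Term.var x⟩

open AffineMap Filter Finset Topology

section Lemmas

variable {V : Type}

section Lattice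

variable {σ τ : V → ℝ}

lemma Term.eval_sup (t : Term V) : t.eval (σ ⊔ τ) = t.eval σ ⊔ t.eval τ := by
  cases t <;> simp [Term.eval]

lemma Term.eval_inf (t : Term V) : t.eval (σ ⊓ τ) = t.eval σ ⊓ t.eval τ := by
  cases t <;> simp [Term.eval]

lemma Comp.holds_sup {a : Comp V} (ha : a.rel ≠ .ne) (hσ : a.holds σ) (hτ : a.holds τ) :
    a.holds (σ ⊔ τ) := by
  obtain ⟨r, t, u⟩ := a
  simp only [Comp.holds, Term.eval_sup] at *
  cases r with
  | lt => exact max_lt_max hσ hτ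
  | le => exact sup_le_sup hσ hτ
  | eq => simp only [Rel.holds] at *; rw [hσ, hτ]
  | ne => exact absurd rfl ha

lemma Comp.holds_inf {a : Comp V} (ha : a.rel ≠ .ne) (hσ : a.holds σ) (hτ : a.holds τ) :
    a.holds (σ ⊓ τ) := by
  obtain ⟨r, t, u⟩ := a
  simp only [Comp.holds, Term.eval_inf] at *
  cases r with
  | lt => exact min_lt_min hσ hτ
  | le => exact inf_le_inf hσ hτ
  | eq => simp only [Rel.holds] at *; rw [hσ, hτ]
  | ne => exact absurd rfl ha

end Lattice

section InfSup

variable {ι κ : Type} [Fintype ι] [Nonempty ι] [Fintype κ] [Nonempty κ]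

def infSup {α : Type} [Lattice α] (w : ι → κ → α) : α :=
  univ.inf' univ_nonempty fun k => univ.sup' univ_nonempty fun i => w i k

lemma infSup_apply (w : ι → κ → V → ℝ) (x : V) : infSup w x = infSup fun i k => w i k x := by
  simp only [infSup, Finset.inf'_apply, Finset.sup'_apply]

lemma Comp.holds_infSup {a : Comp V} (ha : a.rel ≠ .ne) {w : ι → κ → V → ℝ}
    (h : ∀ i k, a.holds (w i k)) : a.holds (infSup w) :=
  inf'_induction _ _ (fun _ hσ _ hτ => holds_inf ha hσ hτ) fun k _ =>
    sup'_induction _ _ (fun _ hσ _ hτ => holds_sup ha hσ hτ) fun i _ => h i k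

lemma lt_infSup_of_row {w : ι → κ → ℝ} {c : ℝ} (i : ι) (h : ∀ k, c < w i k) : c < infSup w := by
  simp only [infSup, lt_inf'_iff, lt_sup'_iff, mem_univ, true_and]
  exact fun k _ => ⟨i, h k⟩

lemma infSup_lt_of_column {w : ι → κ → ℝ} {c : ℝ} (k : κ) (h : ∀ i, w i k < c) : infSup w < c := by
  simp only [infSup, inf'_lt_iff, sup'_lt_iff, mem_univ, true_and]
  exact ⟨k, fun i _ => h i⟩

end InfSup

section Segment

variable {p q p' q' : ℝ}

lemma Rel.holds_lineMap {r : Rel} (hr : r ≠ .ne) (h₀ : r.holds p q) (h₁ : r.holds p' q') {ε : ℝ}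
    (hε : ε ∈ Set.Icc (0 : ℝ) 1) : r.holds (lineMap p p' ε) (lineMap q q' ε) := by
  cases r with
  | lt => exact lineMap_strict_mono_endpoints h₀ h₁ hε.1 hε.2
  | le => exact lineMap_mono_endpoints h₀ h₁ hε.1 hε.2
  | eq => simp only [Rel.holds] at *; rw [h₀, h₁]
  | ne => exact absurd rfl hr

lemma eventually_lineMap_lt_lineMap (h : p < q) :
    ∀ᶠ ε in 𝓝 (0 : ℝ), lineMap p p' ε < lineMap q q' ε := by
  have tendsto_left (a b : ℝ) : Tendsto (fun ε : ℝ => lineMap a b ε) (𝓝 0) (𝓝 a) := by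
    simpa using (lineMap_continuous (p := a) (q := b) (R := ℝ)).tendsto 0
  exact (tendsto_left p p').eventually_lt (tendsto_left q q') h

lemma eventually_lineMap_ne (h₁ : p' ≠ q') :
    ∀ᶠ ε in 𝓝[>] (0 : ℝ), lineMap p p' ε ≠ lineMap q q' ε := by
  rcases lt_trichotomy p q with h₀ | rfl | h₀
  · exact nhdsWithin_le_nhds ((eventually_lineMap_lt_lineMap h₀).mono fun _ => ne_of_lt)
  · filter_upwards [self_mem_nhdsWithin] with ε (hε : 0 < ε)
    rw [lineMap_apply_ring', lineMap_apply_ring']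
    simpa [hε.ne'] using h₁
  · exact nhdsWithin_le_nhds ((eventually_lineMap_lt_lineMap h₀).mono fun _ => ne_of_gt)

end Segment

section Mixing

variable {σ ρ : V → ℝ}

lemma Term.eval_lineMap (t : Term V) (ε : ℝ) :
    t.eval (lineMap σ ρ ε) = lineMap (t.eval σ) (t.eval ρ) ε := by
  cases t <;> simp [Term.eval, pi_lineMap_apply]

lemma Comp.eventually_holds_lineMap {a : Comp V} (h₀ : a.rel ≠ .ne → a.holds σ)
    (h₁ : a.holds ρ) : ∀ᶠ ε in 𝓝[>] (0 : ℝ), a.holds (lineMap σ ρ ε) := by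
  obtain ⟨r, t, u⟩ := a
  simp only [Comp.holds, Term.eval_lineMap] at *
  by_cases hr : r = .ne
  · subst hr
    exact eventually_lineMap_ne h₁
  · filter_upwards [Ioo_mem_nhdsGT one_pos] with ε hε
    exact Rel.holds_lineMap hr (h₀ hr) h₁ (Set.Ioo_subset_Icc_self hε)

lemma Comp.eventually_not_holds_lineMap {a : Comp V} (ha : a.rel = .le) (h : ¬ a.holds σ) :
    ∀ᶠ ε in 𝓝 (0 : ℝ), ¬ a.holds (lineMap σ ρ ε) := by
  obtain ⟨r, t, u⟩ := a
  subst ha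
  simp only [Comp.holds, Rel.holds, Term.eval_lineMap, not_le] at *
  exact eventually_lineMap_lt_lineMap h

lemma Sat.eventually_lineMap {A : Finset (Comp V)} (h₀ : ∀ a ∈ A, a.rel ≠ .ne → a.holds σ)
    (h₁ : Sat A ρ) : ∀ᶠ ε in 𝓝[>] (0 : ℝ), Sat A (lineMap σ ρ ε) :=
  (eventually_all_finset A).2 fun a ha => Comp.eventually_holds_lineMap (h₀ a ha) (h₁ a ha)

end Mixing

section SemiInterval

variable {ι κ : Type} [Fintype ι] [Nonempty ι] [Fintype κ] [Nonempty κ] {b : Comp V}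
  {w : ι → κ → V → ℝ}

lemma IsClosedLSI.rel_eq (hb : IsClosedLSI b) : b.rel = .le := by
  obtain ⟨x, c, rfl⟩ := hb
  rfl

lemma IsClosedRSI.rel_eq (hb : IsClosedRSI b) : b.rel = .le := by
  obtain ⟨x, c, rfl⟩ := hb
  rfl

lemma IsClosedLSI.not_holds_infSup (hb : IsClosedLSI b) (i : ι) (h : ∀ k, ¬ b.holds (w i k)) :
    ¬ b.holds (infSup w) := by
  obtain ⟨x, c, rfl⟩ := hb
  simp only [Comp.holds, Rel.holds, Term.eval, not_le, infSup_apply] at *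
  exact lt_infSup_of_row i h

lemma IsClosedRSI.not_holds_infSup (hb : IsClosedRSI b) (k : κ) (h : ∀ i, ¬ b.holds (w i k)) :
    ¬ b.holds (infSup w) := by
  obtain ⟨x, c, rfl⟩ := hb
  simp only [Comp.holds, Rel.holds, Term.eval, not_le, infSup_apply] at *
  exact infSup_lt_of_column k h

end SemiInterval

end Lemmas

theorem stmt14_general {V : Type} (A : Finset (Comp V))
    (hsat : ∃ σ : V → ℝ, Sat A σ)
    (m : ℕ) (b : Fin m → Comp V)
    (hSI : ∀ j, IsClosedLSI (b j) ∨ IsClosedRSI (b j))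
    (hent : ∀ σ : V → ℝ, Sat A σ → ∃ j, (b j).holds σ) :
    ∃ i j : Fin m, ∀ σ : V → ℝ, Sat A σ → (b i).holds σ ∨ (b j).holds σ := by
  obtain ⟨ρ, hρ⟩ := hsat
  by_contra! hpair
  choose w hwA hwi hwj using hpair
  have : Nonempty (Fin m) := ⟨(hent ρ hρ).choose⟩
  have hσA : ∀ a ∈ A, a.rel ≠ .ne → a.holds (infSup w) := fun a ha hr =>
    Comp.holds_infSup hr fun i k => hwA i k a ha
  have hσb (j : Fin m) : ¬ (b j).holds (infSup w) := by
    rcases hSI j with hb | hb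
    · exact hb.not_holds_infSup j (hwi j)
    · exact hb.not_holds_infSup j (fun i => hwj i j)
  have hb : ∀ᶠ ε in 𝓝[>] (0 : ℝ), ∀ j, ¬ (b j).holds (lineMap (infSup w) ρ ε) := by
    refine eventually_all.2 fun j => nhdsWithin_le_nhds ?_
    refine Comp.eventually_not_holds_lineMap ?_ (hσb j)
    exact (hSI j).elim IsClosedLSI.rel_eq IsClosedRSI.rel_eq
  obtain ⟨ε, hAε, hbε⟩ := ((Sat.eventually_lineMap hσA hρ).and hb).exists
  obtain ⟨j, hj⟩ := hent _ hAε
  exact hbε j hj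

/-- Proposition 13.2: if a satisfiable finite set `A` of atomic
comparisons entails a disjunction of closed semi-interval comparisons
`b₁ ∨ … ∨ bₘ`, then it entails a disjunction of at most two of them. -/
theorem stmt14 {V : Type} (A : Finset (Comp V))
    (hAC : ∀ a ∈ A, IsAC a)
    (hsat : ∃ σ : V → ℝ, Sat A σ)
    (m : ℕ) (b : Fin m → Comp V)
    (hSI : ∀ j, IsClosedLSI (b j) ∨ IsClosedRSI (b j))
    (hent : ∀ σ : V → ℝ, Sat A σ → ∃ j, (b j).holds σ) :
    ∃ i j : Fin m, ∀ σ : V → ℝ, Sat A σ → (b i).holds σ ∨ (b j).holds σ :=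
  stmt14_general A hsat m b hSI hent

end QC
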